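/- arXiv:1906.12183 — 2 statements merged into one kernel-verified Lean document; each statement's English description precedes it below -/
import Mathlib

section
/- Suppose $f_\theta, g_\theta : \mathbb{R}^m \times \mathbb{R}^d \to \mathbb{R}^d$ satisfy: $\|f_\theta(x) - f_{\theta'}(x)\| \leq \max\{g(\|\theta\|), g(\|\theta'\|)\} \|\theta - \theta'\| \|x\|$ and $\|f_\theta(x) - f_\theta(x')\| \leq g(\|\theta\|) \|x - x'\|$ (and likewise for $g_\theta$), where $g : \mathbb{R}_+ \to \mathbb{R}_+$ is nondecreasing with $g(0) \geq 1$. Then the composition $F_\theta = f_{\theta_2} \circ g_{\theta_1}$, $\theta = (\theta_1, \theta_2)$, satisfies $\|F_\theta(x) - F_{\theta'}(x)\| \leq 2 \max\{g^2(\|\theta\|), g^2(\|\theta'\|)\} \|\theta - \theta'\| \|x\|$ and $\|F_\theta(x) - F_\theta(x')\| \leq g^2(\|\theta\|) \|x - x'\|$. -/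
theorem stmt3 (m d : ℕ) (g : ℝ → ℝ)
    (hg_mono : ∀ a b : ℝ, 0 ≤ a → a ≤ b → g a ≤ g b) (hg0 : 1 ≤ g 0)
    (f gg : EuclideanSpace ℝ (Fin m) → EuclideanSpace ℝ (Fin d) → EuclideanSpace ℝ (Fin d))
    (hf_theta : ∀ θ θ' x, ‖f θ x - f θ' x‖ ≤ max (g ‖θ‖) (g ‖θ'‖) * ‖θ - θ'‖ * ‖x‖)
    (hf_x : ∀ θ x x', ‖f θ x - f θ x'‖ ≤ g ‖θ‖ * ‖x - x'‖)
    (hgg_theta : ∀ θ θ' x, ‖gg θ x - gg θ' x‖ ≤ max (g ‖θ‖) (g ‖θ'‖) * ‖θ - θ'‖ * ‖x‖)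
    (hgg_x : ∀ θ x x', ‖gg θ x - gg θ x'‖ ≤ g ‖θ‖ * ‖x - x'‖)
    (hgg_growth : ∀ θ x, ‖gg θ x‖ ≤ g ‖θ‖ * ‖x‖) :
    ∀ (θ θ' : EuclideanSpace ℝ (Fin m) × EuclideanSpace ℝ (Fin m))
      (x x' : EuclideanSpace ℝ (Fin d)),
      ‖f θ.2 (gg θ.1 x) - f θ'.2 (gg θ'.1 x)‖ ≤
          2 * max ((g ‖θ‖) ^ 2) ((g ‖θ'‖) ^ 2) * ‖θ - θ'‖ * ‖x‖ ∧
        ‖f θ.2 (gg θ.1 x) - f θ.2 (gg θ.1 x')‖ ≤ (g ‖θ‖) ^ 2 * ‖x - x'‖ := by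
  intro θ θ' x x'
  have gpos : ∀ t : ℝ, 0 ≤ t → (1:ℝ) ≤ g t := fun t ht => hg0.trans (hg_mono 0 t le_rfl ht)
  have h1 : g ‖θ.1‖ ≤ g ‖θ‖ := hg_mono _ _ (norm_nonneg _) (norm_fst_le θ)
  have h2 : g ‖θ.2‖ ≤ g ‖θ‖ := hg_mono _ _ (norm_nonneg _) (norm_snd_le θ)
  have h1' : g ‖θ'.1‖ ≤ g ‖θ'‖ := hg_mono _ _ (norm_nonneg _) (norm_fst_le θ')
  have h2' : g ‖θ'.2‖ ≤ g ‖θ'‖ := hg_mono _ _ (norm_nonneg _) (norm_snd_le θ')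
  have hgθ : (1:ℝ) ≤ g ‖θ‖ := gpos _ (norm_nonneg _)
  have hgθ' : (1:ℝ) ≤ g ‖θ'‖ := gpos _ (norm_nonneg _)
  set M : ℝ := max (g ‖θ‖) (g ‖θ'‖) with hM
  have hM1 : (1:ℝ) ≤ M := le_trans hgθ (le_max_left _ _)
  have hM0 : (0:ℝ) ≤ M := by linarith
  have hMsq : max ((g ‖θ‖) ^ 2) ((g ‖θ'‖) ^ 2) = M ^ 2 := by
    rcases le_total (g ‖θ‖) (g ‖θ'‖) with h | h
    · rw [hM, max_eq_right h, max_eq_right (pow_le_pow_left₀ (by linarith) h 2)]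
    · rw [hM, max_eq_left h, max_eq_left (pow_le_pow_left₀ (by linarith) h 2)]
  have hd1 : ‖θ.1 - θ'.1‖ ≤ ‖θ - θ'‖ := by
    simpa using norm_fst_le (θ - θ')
  have hd2 : ‖θ.2 - θ'.2‖ ≤ ‖θ - θ'‖ := by
    simpa using norm_snd_le (θ - θ')
  constructor
  · -- term 1
    have hX : ‖gg θ.1 x‖ ≤ M * ‖x‖ := by
      calc ‖gg θ.1 x‖ ≤ g ‖θ.1‖ * ‖x‖ := hgg_growth _ _
        _ ≤ M * ‖x‖ := by
          apply mul_le_mul_of_nonneg_right _ (norm_nonneg _)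
          exact le_trans h1 (le_max_left _ _)
    have hA : ‖f θ.2 (gg θ.1 x) - f θ'.2 (gg θ.1 x)‖ ≤ M * ‖θ - θ'‖ * (M * ‖x‖) := by
      calc ‖f θ.2 (gg θ.1 x) - f θ'.2 (gg θ.1 x)‖
          ≤ max (g ‖θ.2‖) (g ‖θ'.2‖) * ‖θ.2 - θ'.2‖ * ‖gg θ.1 x‖ := hf_theta _ _ _
        _ ≤ M * ‖θ - θ'‖ * (M * ‖x‖) := by
            apply mul_le_mul
            · apply mul_le_mul _ hd2 (norm_nonneg _) hM0
              exact max_le (le_trans h2 (le_max_left _ _)) (le_trans h2' (le_max_right _ _))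
            · exact hX
            · exact norm_nonneg _
            · positivity
    have hB : ‖f θ'.2 (gg θ.1 x) - f θ'.2 (gg θ'.1 x)‖ ≤ M * (M * ‖θ - θ'‖ * ‖x‖) := by
      calc ‖f θ'.2 (gg θ.1 x) - f θ'.2 (gg θ'.1 x)‖
          ≤ g ‖θ'.2‖ * ‖gg θ.1 x - gg θ'.1 x‖ := hf_x _ _ _
        _ ≤ M * (M * ‖θ - θ'‖ * ‖x‖) := by
            apply mul_le_mul (le_trans h2' (le_max_right _ _)) _ (norm_nonneg _) hM0
            calc ‖gg θ.1 x - gg θ'.1 x‖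
                ≤ max (g ‖θ.1‖) (g ‖θ'.1‖) * ‖θ.1 - θ'.1‖ * ‖x‖ := hgg_theta _ _ _
              _ ≤ M * ‖θ - θ'‖ * ‖x‖ := by
                  apply mul_le_mul_of_nonneg_right _ (norm_nonneg _)
                  apply mul_le_mul _ hd1 (norm_nonneg _) hM0
                  exact max_le (le_trans h1 (le_max_left _ _))
                    (le_trans h1' (le_max_right _ _))
    have tri : ‖f θ.2 (gg θ.1 x) - f θ'.2 (gg θ'.1 x)‖ ≤
        ‖f θ.2 (gg θ.1 x) - f θ'.2 (gg θ.1 x)‖ + ‖f θ'.2 (gg θ.1 x) - f θ'.2 (gg θ'.1 x)‖ :=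
      norm_sub_le_norm_sub_add_norm_sub _ _ _
    rw [hMsq]
    nlinarith [norm_nonneg (θ - θ'), norm_nonneg x]
  · calc ‖f θ.2 (gg θ.1 x) - f θ.2 (gg θ.1 x')‖
        ≤ g ‖θ.2‖ * ‖gg θ.1 x - gg θ.1 x'‖ := hf_x _ _ _
      _ ≤ g ‖θ‖ * (g ‖θ‖ * ‖x - x'‖) := by
          apply mul_le_mul h2 _ (norm_nonneg _) (by linarith)
          calc ‖gg θ.1 x - gg θ.1 x'‖ ≤ g ‖θ.1‖ * ‖x - x'‖ := hgg_x _ _ _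
            _ ≤ g ‖θ‖ * ‖x - x'‖ := mul_le_mul_of_nonneg_right h1 (norm_nonneg _)
      _ = (g ‖θ‖) ^ 2 * ‖x - x'‖ := by ring
end

section
/- Suppose $\|\nabla \hat{\mathcal{R}}(\theta)\| \leq G(\|\theta\|)$ for a nondecreasing function $G : \mathbb{R}_+ \to \mathbb{R}_+$. Let $\phi_R$ be a smooth cutoff with $\phi_R = 1$ on $B(0,R)$, $\mathrm{supp}\,\phi_R \subset B(0,2R)$, $0 \leq \phi_R \leq 1$ and $\|\nabla \phi_R\| \leq c/R$, and let $G_1$ be a convex function with $\nabla G_1(\theta) = c\, G(\|\theta\|)\, \theta$. Then with $H = (1 - \phi_R) G_1$ there exists a constant $C = C(R, G, c)$ such that $-\nabla(\hat{\mathcal{R}} + H)(\theta) \cdot \theta \leq C (1 + \|\theta\|^2)$ for all $\theta \in \mathbb{R}^m$. -/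
open Set
open scoped RealInnerProductSpace

private lemma inner_gradient_eq {m : ℕ} (f : EuclideanSpace ℝ (Fin m) → ℝ)
    (θ v : EuclideanSpace ℝ (Fin m)) :
    ⟪gradient f θ, v⟫ = fderiv ℝ f θ v := by
  rw [gradient, InnerProductSpace.toDual_symm_apply]

private lemma norm_gradient_eq {m : ℕ} (f : EuclideanSpace ℝ (Fin m) → ℝ)
    (θ : EuclideanSpace ℝ (Fin m)) :
    ‖gradient f θ‖ = ‖fderiv ℝ f θ‖ := by
  rw [gradient, LinearIsometryEquiv.norm_map]

set_option maxHeartbeats 2000000 in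
theorem stmt9 (m : ℕ)
    (Rhat G1 phiR : EuclideanSpace ℝ (Fin m) → ℝ) (G : ℝ → ℝ) (R c : ℝ)
    (hR : 0 < R) (hc : 0 < c)
    (hG_mono : ∀ a b : ℝ, 0 ≤ a → a ≤ b → G a ≤ G b) (hG_nonneg : ∀ s, 0 ≤ G s)
    (hRhat : Differentiable ℝ Rhat)
    (hRgrad : ∀ θ : EuclideanSpace ℝ (Fin m), ‖gradient Rhat θ‖ ≤ G ‖θ‖)
    (hphi_smooth : ContDiff ℝ (⊤ : ℕ∞) phiR)
    (hphi01 : ∀ θ, phiR θ ∈ Icc (0:ℝ) 1)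
    (hphi_one : ∀ θ : EuclideanSpace ℝ (Fin m), ‖θ‖ ≤ R → phiR θ = 1)
    (hphi_supp : ∀ θ : EuclideanSpace ℝ (Fin m), 2 * R ≤ ‖θ‖ → phiR θ = 0)
    (hphigrad : ∀ θ : EuclideanSpace ℝ (Fin m), ‖gradient phiR θ‖ ≤ c / R)
    (hG1 : Differentiable ℝ G1) (hG1conv : ConvexOn ℝ Set.univ G1)
    (hG1grad : ∀ θ : EuclideanSpace ℝ (Fin m), gradient G1 θ = (c * G ‖θ‖) • θ) :
    ∃ C : ℝ, ∀ θ : EuclideanSpace ℝ (Fin m),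
      -⟪gradient (fun y => Rhat y + (1 - phiR y) * G1 y) θ, θ⟫ ≤ C * (1 + ‖θ‖ ^ 2) := by
  have hphid : Differentiable ℝ phiR := hphi_smooth.differentiable (by simp)
  -- bound on G1 on the closed ball of radius 2R
  obtain ⟨M, hM⟩ : ∃ M : ℝ, M = |G1 0| + c * G (2 * R) * (2 * R) * (2 * R) := ⟨_, rfl⟩
  have hG1bound : ∀ θ : EuclideanSpace ℝ (Fin m), ‖θ‖ ≤ 2 * R → |G1 θ| ≤ M := by
    intro θ hθ
    have hball : θ ∈ Metric.closedBall (0 : EuclideanSpace ℝ (Fin m)) (2 * R) := by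
      simpa [Metric.mem_closedBall] using hθ
    have h0 : (0 : EuclideanSpace ℝ (Fin m)) ∈ Metric.closedBall (0 : EuclideanSpace ℝ (Fin m)) (2 * R) := by
      simp; positivity
    have hmvt : ‖G1 θ - G1 0‖ ≤ (c * G (2 * R) * (2 * R)) * ‖θ - 0‖ := by
      refine Convex.norm_image_sub_le_of_norm_fderiv_le (fun x _ => hG1 x) ?_
        (convex_closedBall _ _) h0 hball
      intro x hx
      have hx' : ‖x‖ ≤ 2 * R := by simpa [Metric.mem_closedBall] using hx
      have : ‖fderiv ℝ G1 x‖ = ‖gradient G1 x‖ := (norm_gradient_eq G1 x).symm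
      rw [this, hG1grad, norm_smul]
      have h1 : |c * G ‖x‖| = c * G ‖x‖ := abs_of_nonneg (mul_nonneg hc.le (hG_nonneg _))
      rw [Real.norm_eq_abs, h1]
      have h2 : G ‖x‖ ≤ G (2 * R) := hG_mono _ _ (norm_nonneg _) hx'
      have := mul_le_mul (mul_le_mul_of_nonneg_left h2 hc.le) hx' (norm_nonneg _)
        (mul_nonneg hc.le (hG_nonneg _))
      linarith
    have h7 : |G1 θ| - |G1 0| ≤ (c * G (2 * R) * (2 * R)) * ‖θ‖ := by
      have h8 := abs_sub_abs_le_abs_sub (G1 θ) (G1 0)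
      have h9 : |G1 θ - G1 0| ≤ (c * G (2 * R) * (2 * R)) * ‖θ‖ := by
        simpa [Real.norm_eq_abs, sub_zero] using hmvt
      linarith
    have h10 : (c * G (2 * R) * (2 * R)) * ‖θ‖ ≤ (c * G (2 * R) * (2 * R)) * (2 * R) := by
      apply mul_le_mul_of_nonneg_left hθ
      have := hG_nonneg (2 * R); positivity
    rw [hM]
    have : c * G (2 * R) * (2 * R) * (2 * R) = c * G (2 * R) * (2 * R) * (2 * R) := rfl
    linarith
  obtain ⟨C, hC⟩ : ∃ C : ℝ, C = G (2 * R) + M * (c / R) + G (1 / c) * (1 / c) := ⟨_, rfl⟩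
  have hMnn : 0 ≤ M := le_trans (abs_nonneg _) (hG1bound 0 (by simp; positivity))
  have hCnn : 0 ≤ C := by
    have h1 := hG_nonneg (2 * R)
    have h2 := hG_nonneg (1 / c)
    have h3 : 0 ≤ M * (c / R) := mul_nonneg hMnn (by positivity)
    have h4 : 0 ≤ G (1 / c) * (1 / c) := by positivity
    rw [hC]; linarith
  refine ⟨C, fun θ => ?_⟩
  -- compute the gradient pairing
  have hfd : HasFDerivAt (fun y => Rhat y + (1 - phiR y) * G1 y)
      (fderiv ℝ Rhat θ + ((1 - phiR θ) • fderiv ℝ G1 θ +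
        G1 θ • ((0 : EuclideanSpace ℝ (Fin m) →L[ℝ] ℝ) - fderiv ℝ phiR θ))) θ := by
    exact ((hRhat θ).hasFDerivAt).add
      ((((hasFDerivAt_const (1:ℝ) θ).sub (hphid θ).hasFDerivAt)).mul (hG1 θ).hasFDerivAt)
  have hkey : ⟪gradient (fun y => Rhat y + (1 - phiR y) * G1 y) θ, θ⟫ =
      fderiv ℝ Rhat θ θ + ((1 - phiR θ) * (fderiv ℝ G1 θ θ) - G1 θ * (fderiv ℝ phiR θ θ)) := by
    rw [inner_gradient_eq, hfd.fderiv]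
    simp only [ContinuousLinearMap.add_apply, ContinuousLinearMap.smul_apply,
      ContinuousLinearMap.sub_apply, ContinuousLinearMap.zero_apply, smul_eq_mul] <;> ring
  have hGradG1 : fderiv ℝ G1 θ θ = c * G ‖θ‖ * ‖θ‖ ^ 2 := by
    rw [← inner_gradient_eq, hG1grad, real_inner_smul_left, real_inner_self_eq_norm_sq]
  have hRterm : -(fderiv ℝ Rhat θ θ) ≤ G ‖θ‖ * ‖θ‖ := by
    have h1 : |fderiv ℝ Rhat θ θ| ≤ ‖fderiv ℝ Rhat θ‖ * ‖θ‖ := (fderiv ℝ Rhat θ).le_opNorm θ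
    have h2 : ‖fderiv ℝ Rhat θ‖ ≤ G ‖θ‖ := by rw [← norm_gradient_eq]; exact hRgrad θ
    have := neg_abs_le (fderiv ℝ Rhat θ θ)
    nlinarith [norm_nonneg θ, abs_nonneg (fderiv ℝ Rhat θ θ)]
  have hphiTerm : |fderiv ℝ phiR θ θ| ≤ (c / R) * ‖θ‖ := by
    have h1 : |fderiv ℝ phiR θ θ| ≤ ‖fderiv ℝ phiR θ‖ * ‖θ‖ := (fderiv ℝ phiR θ).le_opNorm θ
    have h2 : ‖fderiv ℝ phiR θ‖ ≤ c / R := by rw [← norm_gradient_eq]; exact hphigrad θ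
    nlinarith [norm_nonneg θ]
  rw [hkey]
  clear hkey hfd
  have h1θ2 : (0:ℝ) < 1 + ‖θ‖ ^ 2 := by positivity
  by_cases hcase : ‖θ‖ ≤ 2 * R
  · -- inner region: crude bounds
    have hphi0 : (0:ℝ) ≤ phiR θ := (hphi01 θ).1
    have hphi1 : phiR θ ≤ 1 := (hphi01 θ).2
    have hGθ : G ‖θ‖ ≤ G (2 * R) := hG_mono _ _ (norm_nonneg _) hcase
    have hpos : 0 ≤ (1 - phiR θ) * (c * G ‖θ‖ * ‖θ‖ ^ 2) := by
      apply mul_nonneg (by linarith)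
      have := hG_nonneg ‖θ‖; positivity
    have hG1M : |G1 θ| ≤ M := hG1bound θ hcase
    have hmid : G1 θ * fderiv ℝ phiR θ θ ≤ M * (c / R) * ‖θ‖ := by
      calc G1 θ * fderiv ℝ phiR θ θ ≤ |G1 θ * fderiv ℝ phiR θ θ| := le_abs_self _
        _ = |G1 θ| * |fderiv ℝ phiR θ θ| := abs_mul _ _
        _ ≤ M * ((c / R) * ‖θ‖) := by
            apply mul_le_mul hG1M hphiTerm (abs_nonneg _)
            exact le_trans (abs_nonneg _) hG1M
        _ = M * (c / R) * ‖θ‖ := by ring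
    rw [hGradG1]
    have hnle : ‖θ‖ ≤ 1 + ‖θ‖ ^ 2 := by nlinarith [sq_nonneg (‖θ‖ - 1)]
    have hA : G ‖θ‖ * ‖θ‖ ≤ G (2 * R) * (1 + ‖θ‖ ^ 2) := by
      have := hG_nonneg ‖θ‖
      nlinarith [norm_nonneg θ]
    have hB : M * (c / R) * ‖θ‖ ≤ M * (c / R) * (1 + ‖θ‖ ^ 2) := by
      have h0 : 0 ≤ M * (c / R) := mul_nonneg hMnn (by positivity)
      nlinarith [hnle]
    have hGc : 0 ≤ G (1 / c) * (1 / c) * (1 + ‖θ‖ ^ 2) := by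
      have := hG_nonneg (1 / c); positivity
    have hdist : C * (1 + ‖θ‖ ^ 2) = G (2 * R) * (1 + ‖θ‖ ^ 2) + M * (c / R) * (1 + ‖θ‖ ^ 2)
        + G (1 / c) * (1 / c) * (1 + ‖θ‖ ^ 2) := by rw [hC]; ring
    linarith [hRterm, hA, hB, hmid, hpos, hGc]
  · -- outer region: phiR = 0 and its fderiv vanishes
    push_neg at hcase
    have hphi0 : phiR θ = 0 := hphi_supp θ hcase.le
    have hfd0 : fderiv ℝ phiR θ = 0 := by
      apply IsLocalMin.fderiv_eq_zero
      apply IsMinOn.isLocalMin _ (Filter.univ_mem)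
      intro y _
      rw [Set.mem_setOf_eq, hphi0]
      exact (hphi01 y).1
    rw [hGradG1, hphi0, hfd0]
    simp only [ContinuousLinearMap.zero_apply, mul_zero, sub_zero, sub_zero]
    have hmain : -(fderiv ℝ Rhat θ θ) - (1 - 0) * (c * G ‖θ‖ * ‖θ‖ ^ 2)
        ≤ G ‖θ‖ * ‖θ‖ * (1 - c * ‖θ‖) := by
      have := hRterm; nlinarith
    by_cases hbig : 1 / c ≤ ‖θ‖
    · have hneg : G ‖θ‖ * ‖θ‖ * (1 - c * ‖θ‖) ≤ 0 := by
        have h1 : 1 ≤ c * ‖θ‖ := by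
          rw [div_le_iff₀ hc] at hbig; linarith [mul_comm c ‖θ‖]
        have h2 := hG_nonneg ‖θ‖
        have hn := norm_nonneg θ
        exact mul_nonpos_of_nonneg_of_nonpos (mul_nonneg h2 hn) (by linarith)
      have : (0:ℝ) ≤ C * (1 + ‖θ‖ ^ 2) := mul_nonneg hCnn h1θ2.le
      linarith
    · push_neg at hbig
      have hGθ : G ‖θ‖ ≤ G (1 / c) := hG_mono _ _ (norm_nonneg _) hbig.le
      have h2 : G ‖θ‖ * ‖θ‖ * (1 - c * ‖θ‖) ≤ G ‖θ‖ * ‖θ‖ := by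
        have hg := hG_nonneg ‖θ‖
        have hn := norm_nonneg θ
        exact mul_le_of_le_one_right (mul_nonneg hg hn)
          (by nlinarith [mul_nonneg hc.le hn])
      have h3 : G ‖θ‖ * ‖θ‖ ≤ G (1 / c) * (1 / c) :=
        mul_le_mul hGθ hbig.le (norm_nonneg θ) (hG_nonneg _)
      have h4 : G (1 / c) * (1 / c) ≤ C * (1 + ‖θ‖ ^ 2) := by
        have h5a : 0 ≤ G (2 * R) + M * (c / R) := by
          have : 0 ≤ M * (c / R) := mul_nonneg hMnn (by positivity)
          have := hG_nonneg (2 * R); linarith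
        have h5 : 0 ≤ (G (2 * R) + M * (c / R)) * (1 + ‖θ‖ ^ 2) :=
          mul_nonneg h5a h1θ2.le
        have h6 : G (1 / c) * (1 / c) ≤ G (1 / c) * (1 / c) * (1 + ‖θ‖ ^ 2) := by
          have h7 : 0 ≤ G (1 / c) * (1 / c) := by
            have := hG_nonneg (1 / c); positivity
          nlinarith [sq_nonneg ‖θ‖]
        have hdist : C * (1 + ‖θ‖ ^ 2) = (G (2 * R) + M * (c / R)) * (1 + ‖θ‖ ^ 2)
            + G (1 / c) * (1 / c) * (1 + ‖θ‖ ^ 2) := by rw [hC]; ring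
        linarith
      linarith
end
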